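/- The series of H(k)^2/(k+2)^2 over positive integers k converges to −3 + 2ζ(3) + (11/4)ζ(4). -/

import Mathlib

/-!
Summation variables run over `ℕ`, so a positive integer `a` appears in the code as `a + 1`.

After the substitution `H(k) = H(k + 1) - 1/(k + 1)` the series becomes
`B - 2 A₃ + ζ(4) + 2 A₂ - 2 ζ(3) - 3` (the terms in `ζ(2)` cancel), with the Euler sums
`A₂ = ∑ H(n)/n²`, `A₃ = ∑ H(n)/n³` and `B = ∑ H(n)²/n²`. Each Euler sum is found by summing a
positive double or triple series in two orders: `∑ 1/(ab(a+b))` gives `A₂ = 2 ζ(3)`;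
`∑ 1/(a²b(a+b))`, symmetrised, gives `2 A₃ = ζ(2)²`; `∑_{a<c} 1/(a²c²)` gives
`∑ H⁽²⁾(n)/n² = (ζ(2)² + ζ(4))/2`; and `∑ 1/(abc(a+b+c))` is `2 (B - A₃)` when summed over `c`
first, while by cyclic symmetry it is three times
`∑ 1/(ab(a+b+c)²) = B - 2 A₃ + 2 ζ(4) - ∑ H⁽²⁾(n)/n²`. With `ζ(2) = π²/6` and `ζ(4) = π⁴/90`
this gives `B = 17 ζ(4)/4`.
-/

noncomputable def H (k : ℕ) : ℝ := ∑ j ∈ Finset.Icc 1 k, (1 : ℝ) / j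

noncomputable def Hgen (p k : ℕ) : ℝ := ∑ j ∈ Finset.Icc 1 k, (1 : ℝ) / (j : ℝ) ^ p

open Finset Filter Topology Real

lemma H_eq_harmonic (n : ℕ) : H n = harmonic n := by
  simp [H, harmonic_eq_sum_Icc]

lemma H_zero : H 0 = 0 := by simp [H]

lemma H_succ (n : ℕ) : H (n + 1) = H n + 1 / ((n : ℝ) + 1) := by
  simp [H_eq_harmonic, harmonic_succ]

lemma sum_range_eq_H (n : ℕ) : ∑ i ∈ range n, 1 / ((i : ℝ) + 1) = H n := by
  induction n with
  | zero => simp [H]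
  | succ n ih => rw [sum_range_succ, ih, H_succ]

lemma H_nonneg (n : ℕ) : 0 ≤ H n := by
  rw [← sum_range_eq_H]; positivity

lemma one_le_H_succ (n : ℕ) : 1 ≤ H (n + 1) := by
  rw [← sum_range_eq_H, sum_range_succ']
  simp only [CharP.cast_eq_zero, zero_add, div_one, le_add_iff_nonneg_left]
  positivity

lemma H_le_rpow (n : ℕ) : H n ≤ 5 * (n : ℝ) ^ (1 / 4 : ℝ) := by
  rcases Nat.eq_zero_or_pos n with rfl | hn
  · simp [H]
  have h1 : (1 : ℝ) ≤ (n : ℝ) ^ (1 / 4 : ℝ) := one_le_rpow (by exact_mod_cast hn) (by norm_num)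
  have hlog := log_le_rpow_div (n.cast_nonneg (α := ℝ)) (by norm_num : (0 : ℝ) < 1 / 4)
  have := harmonic_le_one_add_log n
  rw [H_eq_harmonic]
  linarith [show (n : ℝ) ^ (1 / 4 : ℝ) / (1 / 4) = 4 * (n : ℝ) ^ (1 / 4 : ℝ) by ring]

lemma Hgen_zero (p : ℕ) : Hgen p 0 = 0 := by simp [Hgen]

lemma Hgen_succ (p n : ℕ) : Hgen p (n + 1) = Hgen p n + 1 / ((n : ℝ) + 1) ^ p := by
  rw [Hgen, sum_Icc_succ_top (by omega), ← Hgen]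
  push_cast; rfl

lemma sum_range_eq_Hgen (p n : ℕ) : ∑ i ∈ range n, 1 / ((i : ℝ) + 1) ^ p = Hgen p n := by
  induction n with
  | zero => simp [Hgen]
  | succ n ih => rw [sum_range_succ, ih, Hgen_succ]

lemma two_mul_sum_range_H_div (n : ℕ) :
    2 * ∑ m ∈ range n, H m / ((m : ℝ) + 1) = H n ^ 2 - Hgen 2 n := by
  induction n with
  | zero => simp [H, Hgen]
  | succ n ih =>
    rw [sum_range_succ, mul_add, ih, H_succ, Hgen_succ]
    have : (n : ℝ) + 1 ≠ 0 := by positivity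
    field_simp
    ring

lemma sum_antidiagonal_fst_add {M : Type*} [AddCommMonoid M] (φ : ℕ → ℕ → M) (n : ℕ) :
    ∑ p ∈ antidiagonal n, φ p.1 (p.1 + p.2) = ∑ i ∈ range (n + 1), φ i n := by
  rw [← Nat.sum_antidiagonal_subst (f := fun p n => φ p.1 n)]
  exact Nat.sum_antidiagonal_eq_sum_range_succ_mk (fun p => φ p.1 n) n

lemma sum_antidiagonal_one_div_mul (n : ℕ) :
    ∑ p ∈ antidiagonal n, 1 / (((p.1 : ℝ) + 1) * ((p.2 : ℝ) + 1))
      = 2 * H (n + 1) / ((n : ℝ) + 2) := by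
  have split : ∀ p ∈ antidiagonal n, 1 / (((p.1 : ℝ) + 1) * ((p.2 : ℝ) + 1))
      = (1 / ((p.1 : ℝ) + 1) + 1 / ((p.2 : ℝ) + 1)) / ((n : ℝ) + 2) := by
    intro p hp
    have hn : (p.1 : ℝ) + p.2 = n := by exact_mod_cast mem_antidiagonal.1 hp
    rw [← hn]
    field_simp
    ring
  rw [sum_congr rfl split, ← sum_div, sum_add_distrib,
    ← Nat.sum_antidiagonal_swap (f := fun p => 1 / ((p.2 : ℝ) + 1))]
  simp only [Prod.snd_swap]
  rw [sum_antidiagonal_fst_add (fun i _ => 1 / ((i : ℝ) + 1)), sum_range_eq_H]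
  ring

lemma HasSum.congr_of_eq {ι M : Type*} [AddCommMonoid M] [TopologicalSpace M] {f g : ι → M}
    {a b : M} (h : HasSum f a)
    (hfg : ∀ i, g i = f i) (hab : a = b) : HasSum g b :=
  hab ▸ h.congr_fun hfg

lemma hasSum_prod_of_nonneg {α β : Type*} {f : α × β → ℝ} (hf : ∀ p, 0 ≤ f p) {g : α → ℝ}
    (hrow : ∀ a, HasSum (fun b => f (a, b)) (g a)) {S : ℝ} (hg : HasSum g S) : HasSum f S := by
  have hsum : Summable f := (summable_prod_of_nonneg hf).2
    ⟨fun a => (hrow a).summable, by simpa only [fun a => (hrow a).tsum_eq] using hg.summable⟩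
  obtain ⟨S', hS'⟩ := hsum
  rwa [hg.unique (hS'.prod_fiberwise hrow)]

lemma HasSum.mul_of_nonneg {α β : Type*} {f : α → ℝ} {g : β → ℝ} {a b : ℝ} (hf : HasSum f a)
    (hg : HasSum g b) (hf0 : ∀ i, 0 ≤ f i) (hg0 : ∀ j, 0 ≤ g j) :
    HasSum (fun p : α × β => f p.1 * g p.2) (a * b) :=
  hasSum_prod_of_nonneg (fun p => mul_nonneg (hf0 p.1) (hg0 p.2)) (fun i => hg.mul_left (f i))
    (hf.mul_right b)

lemma HasSum.sum_antidiagonal {M : Type*} [AddCommMonoid M] [TopologicalSpace M] [ContinuousAdd M]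
    [RegularSpace M] {f : ℕ × ℕ → M} {S : M} (hf : HasSum f S) :
    HasSum (fun n => ∑ p ∈ antidiagonal n, f p) S :=
  (HasAntidiagonal.sigmaAntidiagonalEquivProd.hasSum_iff.2 hf).sigma fun n => by
    rw [← sum_coe_sort]
    exact hasSum_fintype _

lemma hasSum_of_sum_antidiagonal_of_nonneg {f : ℕ × ℕ → ℝ} (hf : ∀ p, 0 ≤ f p) {S : ℝ}
    (h : HasSum (fun n => ∑ p ∈ antidiagonal n, f p) S) : HasSum f S := by
  have hsum : Summable f := by
    rw [← HasAntidiagonal.sigmaAntidiagonalEquivProd.summable_iff]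
    refine (summable_sigma_of_nonneg fun _ => hf _).2 ⟨fun n => (hasSum_fintype _).summable, ?_⟩
    refine h.summable.congr fun n => ?_
    rw [tsum_fintype, ← sum_coe_sort]
    rfl
  obtain ⟨S', hS'⟩ := hsum
  rwa [h.unique hS'.sum_antidiagonal]

lemma hasSum_sub_succ_of_tendsto {f : ℕ → ℝ} (hmono : ∀ n, f (n + 1) ≤ f n)
    (hlim : Tendsto f atTop (𝓝 0)) : HasSum (fun n => f n - f (n + 1)) (f 0) := by
  rw [hasSum_iff_tendsto_nat_of_nonneg (fun n => sub_nonneg.2 (hmono n))]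
  simpa only [sum_range_sub', sub_zero] using (tendsto_const_nhds (x := f 0)).sub hlim

lemma hasSum_succ_iff_of_eq_zero {G : Type*} [AddCommGroup G] [TopologicalSpace G]
    [IsTopologicalAddGroup G] {f : ℕ → G} (h0 : f 0 = 0) {S : G} :
    HasSum (fun n => f (n + 1)) S ↔ HasSum f S := by
  simpa [h0] using hasSum_nat_add_iff' (f := f) (g := S) 1

lemma hasSum_one_div_succ_pow {k : ℕ} (hk : k ≠ 0) {a : ℝ}
    (h : HasSum (fun n : ℕ => 1 / (n : ℝ) ^ k) a) :
    HasSum (fun n : ℕ => 1 / ((n : ℝ) + 1) ^ k) a := by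
  simpa using (hasSum_succ_iff_of_eq_zero (f := fun n : ℕ => 1 / (n : ℝ) ^ k) (by simp [hk])).2 h

lemma hasSum_one_div_succ_sq : HasSum (fun n : ℕ => 1 / ((n : ℝ) + 1) ^ 2) (π ^ 2 / 6) :=
  hasSum_one_div_succ_pow two_ne_zero hasSum_zeta_two

lemma Hgen_two_le (n : ℕ) : Hgen 2 n ≤ π ^ 2 / 6 := by
  rw [← sum_range_eq_Hgen]
  exact sum_le_hasSum _ (fun _ _ => by positivity) hasSum_one_div_succ_sq

lemma hasSum_one_div_succ_pow_four :
    HasSum (fun n : ℕ => 1 / ((n : ℝ) + 1) ^ 4) (π ^ 4 / 90) :=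
  hasSum_one_div_succ_pow four_ne_zero hasSum_zeta_four

lemma summable_one_div_succ_pow {k : ℕ} (hk : 1 < k) :
    Summable (fun n : ℕ => 1 / ((n : ℝ) + 1) ^ k) :=
  ⟨_, hasSum_one_div_succ_pow (by omega) (Real.summable_one_div_nat_pow.2 hk).hasSum⟩

lemma riemannZeta_natCast_eq_tsum {k : ℕ} (hk : 1 < k) :
    riemannZeta k = ((∑' n : ℕ, 1 / ((n : ℝ) + 1) ^ k : ℝ) : ℂ) := by
  have h : HasSum (fun n : ℕ => 1 / (n : ℂ) ^ k) (∑' n : ℕ, 1 / ((n : ℝ) + 1) ^ k : ℝ) := by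
    rw [← hasSum_succ_iff_of_eq_zero (by simp; omega)]
    simpa using Complex.hasSum_ofReal.2 (summable_one_div_succ_pow hk).hasSum
  rw [zeta_nat_eq_tsum_of_gt_one hk, h.tsum_eq]

lemma tendsto_one_div_add_add_one (j : ℕ) :
    Tendsto (fun k : ℕ => 1 / ((k : ℝ) + j + 1)) atTop (𝓝 0) :=
  ((tendsto_one_div_add_atTop_nhds_zero_nat (𝕜 := ℝ)).comp (tendsto_add_atTop_nat j)).congr
    fun k => by simp

lemma hasSum_one_div_sq_tail (m : ℕ) :
    HasSum (fun k : ℕ => 1 / ((k : ℝ) + m + 1) ^ 2) (π ^ 2 / 6 - Hgen 2 m) := by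
  have h := (hasSum_nat_add_iff' m).2 hasSum_one_div_succ_sq
  rw [sum_range_eq_Hgen] at h
  simpa using h

lemma hasSum_one_div_sub_one_div_add (m : ℕ) :
    HasSum (fun k : ℕ => 1 / ((k : ℝ) + 1) - 1 / ((k : ℝ) + m + 1)) (H m) := by
  set f : ℕ → ℝ := fun k => ∑ i ∈ range m, 1 / ((k : ℝ) + i + 1) with hf
  have hstep : ∀ k : ℕ, f k - f (k + 1) = 1 / ((k : ℝ) + 1) - 1 / ((k : ℝ) + m + 1) := by
    intro k
    rw [hf, ← sum_sub_distrib]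
    convert sum_range_sub' (fun i : ℕ => 1 / ((k : ℝ) + i + 1)) m using 2 <;> push_cast <;> ring
  have hmono : ∀ k, f (k + 1) ≤ f k := fun k => sum_le_sum fun i _ => by
    push_cast
    gcongr
    linarith
  have hlim : Tendsto f atTop (𝓝 0) := by
    rw [show (0 : ℝ) = ∑ i ∈ range m, 0 by simp]
    exact tendsto_finsetSum _ fun i _ =>
      (tendsto_one_div_add_add_one i).congr fun k => by ring_nf
  refine (hasSum_sub_succ_of_tendsto hmono hlim).congr_of_eq (fun k => (hstep k).symm) ?_
  simp [hf, ← sum_range_eq_H, add_comm]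

lemma hasSum_one_div_mul_add_succ (m : ℕ) :
    HasSum (fun k : ℕ => 1 / (((k : ℝ) + 1) * ((k : ℝ) + m + 2))) (H (m + 1) / ((m : ℝ) + 1)) := by
  refine ((hasSum_one_div_sub_one_div_add (m + 1)).div_const ((m : ℝ) + 1)).congr_fun
    fun k => ?_
  push_cast
  field_simp
  ring

lemma hasSum_one_div_mul_succ (j : ℕ) :
    HasSum (fun k : ℕ => 1 / (((k : ℝ) + j + 1) * ((k : ℝ) + j + 2))) (1 / ((j : ℝ) + 1)) := by
  have hmono : ∀ k : ℕ, 1 / (((k + 1 : ℕ) : ℝ) + j + 1) ≤ 1 / ((k : ℝ) + j + 1) := fun k => by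
    push_cast
    gcongr
    linarith
  refine (hasSum_sub_succ_of_tendsto hmono (tendsto_one_div_add_add_one j)).congr_of_eq
    (fun k => ?_) (by simp)
  push_cast
  field_simp
  ring

local notation "ζ₃" => ∑' n : ℕ, 1 / ((n : ℝ) + 1) ^ 3

lemma summable_H_sq_div_sq : Summable (fun n : ℕ => H (n + 1) ^ 2 / ((n : ℝ) + 1) ^ 2) := by
  have hmaj : Summable (fun n : ℕ => 25 * ((n : ℝ) + 1) ^ (-(3 / 2) : ℝ)) := by
    have := (summable_nat_add_iff 1).2
      (Real.summable_nat_rpow.2 (by norm_num : (-(3 / 2) : ℝ) < -1))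
    exact (this.mul_left 25).congr fun n => by push_cast; rfl
  refine Summable.of_nonneg_of_le (fun n => by positivity) (fun n => ?_) hmaj
  have h0 : (0 : ℝ) < n + 1 := by positivity
  have hH := H_le_rpow (n + 1)
  push_cast at hH
  calc H (n + 1) ^ 2 / ((n : ℝ) + 1) ^ 2
      ≤ (5 * ((n : ℝ) + 1) ^ (1 / 4 : ℝ)) ^ 2 / ((n : ℝ) + 1) ^ 2 := by
        gcongr
        exact H_nonneg _
    _ = 25 * ((n : ℝ) + 1) ^ (-(3 / 2) : ℝ) := by
        rw [mul_pow, ← rpow_natCast (_ ^ _), ← rpow_mul h0.le, ← rpow_natCast (_ + 1),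
          mul_div_assoc, ← rpow_sub h0]
        norm_num

lemma summable_H_div_sq : Summable (fun n : ℕ => H (n + 1) / ((n : ℝ) + 1) ^ 2) :=
  summable_H_sq_div_sq.of_nonneg_of_le (fun n => div_nonneg (H_nonneg _) (by positivity))
    fun n => by gcongr; exact le_self_pow₀ (one_le_H_succ n) two_ne_zero

lemma summable_H_div_cube : Summable (fun n : ℕ => H (n + 1) / ((n : ℝ) + 1) ^ 3) :=
  summable_H_div_sq.of_nonneg_of_le (fun n => div_nonneg (H_nonneg _) (by positivity))
    fun n => by
      gcongr
      · exact H_nonneg _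
      · linarith [n.cast_nonneg (α := ℝ)]
      · norm_num

lemma summable_Hgen_two_div_sq :
    Summable (fun n : ℕ => Hgen 2 (n + 1) / ((n : ℝ) + 1) ^ 2) := by
  refine ((summable_one_div_succ_pow one_lt_two).mul_left (π ^ 2 / 6)).of_nonneg_of_le
    (fun n => div_nonneg (by rw [← sum_range_eq_Hgen]; positivity) (by positivity)) fun n => ?_
  rw [mul_one_div]
  gcongr
  exact Hgen_two_le _

lemma hasSum_H_div_sq : HasSum (fun n : ℕ => H (n + 1) / ((n : ℝ) + 1) ^ 2) (2 * ζ₃) := by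
  obtain ⟨A, hA⟩ := summable_H_div_sq
  have hζ₃ := (summable_one_div_succ_pow (by norm_num : 1 < 3)).hasSum
  have hrows : HasSum
      (fun p : ℕ × ℕ => 1 / (((p.1 : ℝ) + 1) * ((p.2 : ℝ) + 1) * ((p.1 : ℝ) + p.2 + 2))) A := by
    refine hasSum_prod_of_nonneg (fun p => by positivity) (fun i => ?_) hA
    have h := (hasSum_one_div_mul_add_succ i).div_const ((i : ℝ) + 1)
    rw [div_div, ← sq] at h
    refine h.congr_fun fun k => ?_
    field_simp
    ring
  have hpred : HasSum (fun n : ℕ => H n / ((n : ℝ) + 1) ^ 2) (A - ζ₃) :=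
    (hA.sub hζ₃).congr_fun fun n => by
      rw [H_succ]
      field_simp
      ring
  have hdiag : HasSum (fun p : ℕ × ℕ => 1 / (((p.1 : ℝ) + 1) * (((p.1 + p.2 : ℕ) : ℝ) + 2) ^ 2))
      (A - ζ₃) := by
    refine hasSum_of_sum_antidiagonal_of_nonneg (fun p => by positivity) ?_
    rw [← hasSum_succ_iff_of_eq_zero (by simp [H_zero])] at hpred
    refine hpred.congr_fun fun n => ?_
    rw [sum_antidiagonal_fst_add (fun i n => 1 / (((i : ℝ) + 1) * ((n : ℝ) + 2) ^ 2)),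
      ← sum_range_eq_H, sum_div]
    refine sum_congr rfl fun i _ => ?_
    push_cast
    field_simp
    ring
  have hsplit := hdiag.add ((Equiv.prodComm ℕ ℕ).hasSum_iff.2 hdiag)
  have hA_eq : A = A - ζ₃ + (A - ζ₃) := hrows.unique <| hsplit.congr_fun fun p => by
    simp only [Function.comp_apply, Equiv.prodComm_apply, Prod.fst_swap, Prod.snd_swap]
    push_cast
    field_simp
    ring
  convert hA using 1
  linarith

lemma hasSum_H_div_cube : HasSum (fun n : ℕ => H (n + 1) / ((n : ℝ) + 1) ^ 3) (π ^ 4 / 72) := by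
  obtain ⟨A, hA⟩ := summable_H_div_cube
  have hrows : HasSum
      (fun p : ℕ × ℕ => 1 / (((p.1 : ℝ) + 1) ^ 2 * ((p.2 : ℝ) + 1) * ((p.1 : ℝ) + p.2 + 2))) A := by
    refine hasSum_prod_of_nonneg (fun p => by positivity) (fun i => ?_) hA
    have h := (hasSum_one_div_mul_add_succ i).div_const (((i : ℝ) + 1) ^ 2)
    rw [div_div, ← pow_succ'] at h
    refine h.congr_fun fun k => ?_
    field_simp
    ring
  have hprod : HasSum (fun p : ℕ × ℕ => 1 / ((p.1 : ℝ) + 1) ^ 2 * (1 / ((p.2 : ℝ) + 1) ^ 2))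
      (π ^ 2 / 6 * (π ^ 2 / 6)) :=
    hasSum_one_div_succ_sq.mul_of_nonneg hasSum_one_div_succ_sq (fun _ => by positivity)
      fun _ => by positivity
  have hsplit := hrows.add ((Equiv.prodComm ℕ ℕ).hasSum_iff.2 hrows)
  have hA_eq : π ^ 2 / 6 * (π ^ 2 / 6) = A + A := hprod.unique <| hsplit.congr_fun fun p => by
    simp only [Function.comp_apply, Equiv.prodComm_apply, Prod.fst_swap, Prod.snd_swap]
    field_simp
    ring
  convert hA using 1
  linarith

lemma hasSum_Hgen_two_div_sq :
    HasSum (fun n : ℕ => Hgen 2 (n + 1) / ((n : ℝ) + 1) ^ 2) (7 * π ^ 4 / 360) := by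
  obtain ⟨Z, hZ⟩ := summable_Hgen_two_div_sq
  have hrows : HasSum
      (fun p : ℕ × ℕ => 1 / (((p.1 : ℝ) + 1) ^ 2 * (((p.1 + p.2 : ℕ) : ℝ) + 2) ^ 2))
      (π ^ 2 / 6 * (π ^ 2 / 6) - Z) := by
    have houter : HasSum (fun i : ℕ => (π ^ 2 / 6 - Hgen 2 (i + 1)) / ((i : ℝ) + 1) ^ 2)
        (π ^ 2 / 6 * (π ^ 2 / 6) - Z) :=
      ((hasSum_one_div_succ_sq.mul_right (π ^ 2 / 6)).sub hZ).congr_fun fun i => by ring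
    refine hasSum_prod_of_nonneg (fun p => by positivity) (fun i => ?_) houter
    refine ((hasSum_one_div_sq_tail (i + 1)).div_const (((i : ℝ) + 1) ^ 2)).congr_fun
      fun k => ?_
    push_cast
    field_simp
    ring
  have hpred : HasSum (fun n : ℕ => Hgen 2 n / ((n : ℝ) + 1) ^ 2) (Z - π ^ 4 / 90) :=
    (hZ.sub hasSum_one_div_succ_pow_four).congr_fun fun n => by
      rw [Hgen_succ]
      field_simp
      ring
  rw [← hasSum_succ_iff_of_eq_zero (by simp [Hgen_zero])] at hpred
  have hdiag : HasSum
      (fun p : ℕ × ℕ => 1 / (((p.1 : ℝ) + 1) ^ 2 * (((p.1 + p.2 : ℕ) : ℝ) + 2) ^ 2))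
      (Z - π ^ 4 / 90) := by
    refine hasSum_of_sum_antidiagonal_of_nonneg (fun p => by positivity)
      (hpred.congr_fun fun n => ?_)
    rw [sum_antidiagonal_fst_add (fun i n => 1 / (((i : ℝ) + 1) ^ 2 * ((n : ℝ) + 2) ^ 2)),
      ← sum_range_eq_Hgen, sum_div]
    refine sum_congr rfl fun i _ => ?_
    push_cast
    field_simp
    ring
  have hZ_eq := hrows.unique hdiag
  convert hZ using 1
  linear_combination (1 / 2 : ℝ) * hZ_eq

lemma hasSum_H_div_mul_add_sq {B : ℝ}
    (hB : HasSum (fun n : ℕ => H (n + 1) ^ 2 / ((n : ℝ) + 1) ^ 2) B) :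
    HasSum (fun p : ℕ × ℕ => H p.1 / (((p.1 : ℝ) + 1) * (((p.1 + p.2 : ℕ) : ℝ) + 2) ^ 2))
      ((B - π ^ 4 / 40) / 2) := by
  have hpred : HasSum (fun n : ℕ => (H n ^ 2 - Hgen 2 n) / (2 * ((n : ℝ) + 1) ^ 2))
      ((B - π ^ 4 / 40) / 2) := by
    have h := (((hB.sub (hasSum_H_div_cube.mul_left 2)).sub hasSum_Hgen_two_div_sq).add
      (hasSum_one_div_succ_pow_four.mul_left 2)).div_const 2
    refine h.congr_of_eq (fun n => ?_) (by ring)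
    rw [H_succ, Hgen_succ]
    field_simp
    ring
  rw [← hasSum_succ_iff_of_eq_zero (by simp [H_zero, Hgen_zero])] at hpred
  refine hasSum_of_sum_antidiagonal_of_nonneg (fun p => div_nonneg (H_nonneg _) (by positivity))
    (hpred.congr_fun fun n => ?_)
  rw [sum_antidiagonal_fst_add (fun i n => H i / (((i : ℝ) + 1) * ((n : ℝ) + 2) ^ 2)),
    ← two_mul_sum_range_H_div, mul_sum, sum_div]
  refine sum_congr rfl fun i _ => ?_
  push_cast
  field_simp
  ring

lemma hasSum_one_div_mul_mul_add_sq {B : ℝ}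
    (hB : HasSum (fun n : ℕ => H (n + 1) ^ 2 / ((n : ℝ) + 1) ^ 2) B) :
    HasSum (fun p : (ℕ × ℕ) × ℕ =>
      1 / (((p.1.1 : ℝ) + 1) * ((p.1.2 : ℝ) + 1) * ((p.1.1 : ℝ) + p.1.2 + p.2 + 3) ^ 2))
      (B - π ^ 4 / 40) := by
  have hfib : HasSum (fun m : ℕ => H m / ((m : ℝ) + 1) * (π ^ 2 / 6 - Hgen 2 (m + 1)))
      ((B - π ^ 4 / 40) / 2) :=
    (hasSum_H_div_mul_add_sq hB).prod_fiberwise fun m =>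
      ((hasSum_one_div_sq_tail (m + 1)).mul_left (H m / ((m : ℝ) + 1))).congr_fun fun c => by
        push_cast
        field_simp
        ring
  rw [← hasSum_succ_iff_of_eq_zero (by simp [H_zero])] at hfib
  have houter : HasSum (fun q : ℕ × ℕ =>
      (π ^ 2 / 6 - Hgen 2 (q.1 + q.2 + 2)) / (((q.1 : ℝ) + 1) * ((q.2 : ℝ) + 1)))
      (B - π ^ 4 / 40) := by
    refine hasSum_of_sum_antidiagonal_of_nonneg
      (fun q => div_nonneg (sub_nonneg.2 (Hgen_two_le _)) (by positivity))
      ((hfib.mul_left 2).congr_of_eq (fun n => ?_) (by ring))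
    calc ∑ p ∈ antidiagonal n,
          (π ^ 2 / 6 - Hgen 2 (p.1 + p.2 + 2)) / (((p.1 : ℝ) + 1) * ((p.2 : ℝ) + 1))
        = (π ^ 2 / 6 - Hgen 2 (n + 2)) *
            ∑ p ∈ antidiagonal n, 1 / (((p.1 : ℝ) + 1) * ((p.2 : ℝ) + 1)) := by
          rw [mul_sum]
          exact sum_congr rfl fun p hp => by rw [mem_antidiagonal.1 hp]; ring
      _ = _ := by
          rw [sum_antidiagonal_one_div_mul]
          push_cast
          ring
  refine hasSum_prod_of_nonneg (fun p => by positivity) (fun q => ?_) houter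
  refine ((hasSum_one_div_sq_tail (q.1 + q.2 + 2)).div_const _).congr_fun fun c => ?_
  push_cast
  field_simp
  ring

lemma hasSum_one_div_mul_mul_mul_add {B : ℝ}
    (hB : HasSum (fun n : ℕ => H (n + 1) ^ 2 / ((n : ℝ) + 1) ^ 2) B) :
    HasSum (fun p : (ℕ × ℕ) × ℕ =>
      1 / (((p.1.1 : ℝ) + 1) * ((p.1.2 : ℝ) + 1) * ((p.2 : ℝ) + 1) *
        ((p.1.1 : ℝ) + p.1.2 + p.2 + 3)))
      (2 * B - π ^ 4 / 36) := by
  have hpred : HasSum (fun n : ℕ => 2 * (H (n + 1) * H n) / ((n : ℝ) + 1) ^ 2)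
      (2 * B - π ^ 4 / 36) := by
    refine ((hB.sub hasSum_H_div_cube).mul_left 2).congr_of_eq (fun n => ?_) (by ring)
    rw [H_succ]
    field_simp
    ring
  rw [← hasSum_succ_iff_of_eq_zero (by simp [H_zero])] at hpred
  have houter : HasSum (fun q : ℕ × ℕ =>
      H (q.1 + q.2 + 2) / (((q.1 : ℝ) + 1) * ((q.2 : ℝ) + 1) * ((q.1 : ℝ) + q.2 + 2)))
      (2 * B - π ^ 4 / 36) := by
    refine hasSum_of_sum_antidiagonal_of_nonneg (fun q => div_nonneg (H_nonneg _) (by positivity))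
      (hpred.congr_fun fun n => ?_)
    calc ∑ p ∈ antidiagonal n,
          H (p.1 + p.2 + 2) / (((p.1 : ℝ) + 1) * ((p.2 : ℝ) + 1) * ((p.1 : ℝ) + p.2 + 2))
        = H (n + 2) / ((n : ℝ) + 2) *
            ∑ p ∈ antidiagonal n, 1 / (((p.1 : ℝ) + 1) * ((p.2 : ℝ) + 1)) := by
          rw [mul_sum]
          refine sum_congr rfl fun p hp => ?_
          have hn : (p.1 : ℝ) + p.2 = n := by exact_mod_cast mem_antidiagonal.1 hp
          rw [mem_antidiagonal.1 hp, hn]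
          field_simp
      _ = _ := by
          rw [sum_antidiagonal_one_div_mul]
          push_cast
          field_simp
          ring
  refine hasSum_prod_of_nonneg (fun p => by positivity) (fun q => ?_) houter
  refine ((hasSum_one_div_mul_add_succ (q.1 + q.2 + 1)).div_const
    (((q.1 : ℝ) + 1) * ((q.2 : ℝ) + 1))).congr_of_eq (fun c => ?_) ?_
  · push_cast
    field_simp
    ring
  · push_cast
    field_simp
    ring

lemma hasSum_H_sq_div_sq :
    HasSum (fun n : ℕ => H (n + 1) ^ 2 / ((n : ℝ) + 1) ^ 2) (17 * π ^ 4 / 360) := by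
  obtain ⟨B, hB⟩ := summable_H_sq_div_sq
  let rotate : (ℕ × ℕ) × ℕ ≃ (ℕ × ℕ) × ℕ :=
    (Equiv.prodAssoc ℕ ℕ ℕ).trans (Equiv.prodComm ℕ (ℕ × ℕ))
  have hW := hasSum_one_div_mul_mul_add_sq hB
  -- `1/(abc s) = (1/(ab) + 1/(bc) + 1/(ca))/s²` for `s = a + b + c`
  have hU := (hW.add (rotate.hasSum_iff.2 hW)).add ((rotate.trans rotate).hasSum_iff.2 hW)
  have hB_eq : 2 * B - π ^ 4 / 36 = B - π ^ 4 / 40 + (B - π ^ 4 / 40) + (B - π ^ 4 / 40) :=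
    (hasSum_one_div_mul_mul_mul_add hB).unique <| hU.congr_fun fun ⟨⟨a, b⟩, c⟩ => by
      simp only [rotate, Function.comp_apply, Equiv.trans_apply, Equiv.prodAssoc_apply,
        Equiv.prodComm_apply, Prod.swap_prod_mk]
      field_simp
      ring
  convert hB using 1
  linarith

lemma hasSum_H_div_mul_succ :
    HasSum (fun n : ℕ => H (n + 1) / (((n : ℝ) + 1) * ((n : ℝ) + 2))) (π ^ 2 / 6) := by
  have hrows : HasSum (fun p : ℕ × ℕ =>
      1 / (((p.1 : ℝ) + 1) * (((p.1 + p.2 : ℕ) : ℝ) + 1) * (((p.1 + p.2 : ℕ) : ℝ) + 2)))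
      (π ^ 2 / 6) :=
    hasSum_prod_of_nonneg (fun p => by positivity) (fun i =>
      ((hasSum_one_div_mul_succ i).div_const ((i : ℝ) + 1)).congr_of_eq (fun k => by
        push_cast
        field_simp
        ring) (by field_simp)) hasSum_one_div_succ_sq
  refine hrows.sum_antidiagonal.congr_fun fun n => ?_
  rw [sum_antidiagonal_fst_add
    (fun i n => 1 / (((i : ℝ) + 1) * ((n : ℝ) + 1) * ((n : ℝ) + 2))), ← sum_range_eq_H, sum_div]
  refine sum_congr rfl fun i _ => ?_
  field_simp

lemma hasSum_H_div_mul_succ_sq :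
    HasSum (fun n : ℕ => H (n + 1) / (((n : ℝ) + 1) * ((n : ℝ) + 2) ^ 2)) (π ^ 2 / 6 - ζ₃) := by
  have hpred : HasSum (fun n : ℕ => H n / ((n : ℝ) + 1) ^ 2) ζ₃ := by
    refine (hasSum_H_div_sq.sub (summable_one_div_succ_pow (by norm_num : 1 < 3)).hasSum
      ).congr_of_eq (fun n => ?_) (by ring)
    rw [H_succ]
    field_simp
    ring
  rw [← hasSum_succ_iff_of_eq_zero (by simp [H_zero])] at hpred
  refine (hasSum_H_div_mul_succ.sub hpred).congr_fun fun n => ?_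
  push_cast
  field_simp
  ring

lemma hasSum_one_div_sq_mul_succ_sq :
    HasSum (fun n : ℕ => 1 / (((n : ℝ) + 1) ^ 2 * ((n : ℝ) + 2) ^ 2)) (π ^ 2 / 3 - 3) := by
  refine ((hasSum_one_div_succ_sq.add (hasSum_one_div_sq_tail 1)).sub
    ((hasSum_one_div_mul_succ 0).mul_left 2)).congr_of_eq (fun n => ?_) ?_
  · push_cast
    field_simp
    ring
  · simp [Hgen]
    ring

lemma hasSum_H_sq_div_add_three_sq :
    HasSum (fun k : ℕ => H (k + 1) ^ 2 / ((k : ℝ) + 3) ^ 2)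
      (-3 + 2 * ζ₃ + 11 * (π ^ 4 / 90) / 4) := by
  have hpred : HasSum (fun n : ℕ => H n ^ 2 / ((n : ℝ) + 1) ^ 2) (11 * π ^ 4 / 360) := by
    refine ((hasSum_H_sq_div_sq.sub (hasSum_H_div_cube.mul_left 2)).add
      hasSum_one_div_succ_pow_four).congr_of_eq (fun n => ?_) (by ring)
    rw [H_succ]
    field_simp
    ring
  rw [← hasSum_succ_iff_of_eq_zero (by simp [H_zero])] at hpred
  have h : HasSum (fun n : ℕ => H n ^ 2 / ((n : ℝ) + 2) ^ 2)
      (-3 + 2 * ζ₃ + 11 * (π ^ 4 / 90) / 4) := by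
    refine ((hpred.sub (hasSum_H_div_mul_succ_sq.mul_left 2)).add
      hasSum_one_div_sq_mul_succ_sq).congr_of_eq (fun n => ?_) (by ring)
    rw [H_succ]
    push_cast
    field_simp
    ring
  exact ((hasSum_succ_iff_of_eq_zero (by simp [H_zero])).2 h).congr_fun fun k => by push_cast; ring

theorem euler_sum_14 :
    HasSum (fun k : ℕ => (H (k+1) : ℂ) ^ 2 / ((k : ℂ) + 3) ^ 2) (-3 + 2 * riemannZeta 3 + 11 * riemannZeta 4 / 4) := by
  have hζ₃ : riemannZeta 3 = (ζ₃ : ℂ) := by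
    exact_mod_cast riemannZeta_natCast_eq_tsum (k := 3) (by norm_num)
  rw [hζ₃, riemannZeta_four]
  exact_mod_cast Complex.hasSum_ofReal.2 hasSum_H_sq_div_add_three_sq
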